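/- Let R be a relation on a finite set X with eventual period q, X_R its set of recurrent points, and R̄ = R^(q+1). Then for all n ≥ 1, the restriction (R̄^n) ∩ (X_R × X_R) equals (R̄ ∩ (X_R × X_R))^n. -/

import Mathlib

/-!
Since `R^(2q) = R^q`, the relation `P = R^q` is idempotent. On a finite set an idempotent
relation factors every step through a recurrent point: the points `c` with `a P c P b` form a
nonempty set in which every point has a `P`-successor, so by transitivity and finiteness one of
them satisfies `c P c`. Moreover `R^(m + q) = R^m` for `m ≥ q`, so a pair in `R̄^(n+1)` with
`n ≥ 1` splits as `R̄^n` followed by `R̄` through a point of `X_R`; induction on `n` then shows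
that a chain of `R̄`-steps between recurrent points can be taken with all its vertices recurrent.
-/

open Set Pointwise

variable {X : Type*}

def relComp (S R : Set (X × X)) : Set (X × X) :=
  {p | ∃ y, (p.1, y) ∈ R ∧ (y, p.2) ∈ S}

def relPow (R : Set (X × X)) : ℕ → Set (X × X)
  | 0 => {p | p.1 = p.2}
  | n + 1 => relComp R (relPow R n)

def relPer (R : Set (X × X)) : Set ℕ :=
  {q | 0 < q ∧ ∃ N, ∀ n ≥ N, relPow R (q + n) = relPow R n}

def relRecurrent (R : Set (X × X)) (x : X) : Prop :=
  ∃ n, 1 ≤ n ∧ (x, x) ∈ relPow R n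

theorem exists_rel_self_of_forall_exists_rel {r : X → X → Prop}
    (htrans : ∀ a b c, r a b → r b c → r a c) {s : Set X} (hfin : s.Finite) (hne : s.Nonempty)
    (hsucc : ∀ x ∈ s, ∃ y ∈ s, r x y) : ∃ x ∈ s, r x x := by
  have := hfin.to_subtype
  by_contra! hirr
  let r' : s → s → Prop := fun a b => r b a
  have : IsTrans s r' := ⟨fun a b c hab hbc => htrans c b a hbc hab⟩
  have : Std.Irrefl r' := ⟨fun a => hirr a a.2⟩
  obtain ⟨m, -, hm⟩ :=
    (Finite.wellFounded_of_trans_of_irrefl r').has_min univ ⟨⟨_, hne.some_mem⟩, trivial⟩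
  obtain ⟨y, hy, hmy⟩ := hsucc m m.2
  exact hm ⟨y, hy⟩ trivial hmy

theorem mem_relComp {S R : Set (X × X)} {x z : X} :
    (x, z) ∈ relComp S R ↔ ∃ y, (x, y) ∈ R ∧ (y, z) ∈ S :=
  Iff.rfl

theorem relComp_assoc (T S R : Set (X × X)) :
    relComp T (relComp S R) = relComp (relComp T S) R := by
  ext ⟨x, z⟩
  simp only [mem_relComp]
  aesop

theorem relPow_one (R : Set (X × X)) : relPow R 1 = R := by
  ext ⟨x, z⟩
  simp [relPow, mem_relComp]

theorem relPow_add (R : Set (X × X)) (m n : ℕ) :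
    relPow R (m + n) = relComp (relPow R n) (relPow R m) := by
  induction n with
  | zero =>
    ext ⟨x, z⟩
    simp [relPow, mem_relComp]
  | succ n ih =>
    rw [← Nat.add_assoc, relPow, ih, relComp_assoc]
    rfl

theorem relPow_relPow (R : Set (X × X)) (k n : ℕ) :
    relPow (relPow R k) n = relPow R (n * k) := by
  induction n with
  | zero => rw [Nat.zero_mul]; rfl
  | succ n ih => rw [relPow, ih, Nat.succ_mul, relPow_add]

theorem exists_rel_self_between_of_relComp_self [Finite X] {P : Set (X × X)}
    (hP : relComp P P = P) {a b : X} (hab : (a, b) ∈ P) :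
    ∃ c, (c, c) ∈ P ∧ (a, c) ∈ P ∧ (c, b) ∈ P := by
  have hsplit : ∀ {x z}, (x, z) ∈ P → ∃ y, (x, y) ∈ P ∧ (y, z) ∈ P := fun h => by
    rwa [← hP] at h
  have htrans : ∀ x y z, (x, y) ∈ P → (y, z) ∈ P → (x, z) ∈ P := fun x y z hxy hyz => by
    rw [← hP]; exact ⟨y, hxy, hyz⟩
  obtain ⟨c, ⟨hac, hcb⟩, hcc⟩ :=
    exists_rel_self_of_forall_exists_rel (r := fun x y => (x, y) ∈ P) htrans
      (s := {c | (a, c) ∈ P ∧ (c, b) ∈ P}) (toFinite _) (hsplit hab) fun c ⟨hac, hcb⟩ => by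
        obtain ⟨d, hcd, hdb⟩ := hsplit hcb
        exact ⟨d, ⟨htrans a c d hac hcd, hdb⟩, hcd⟩
  exact ⟨c, hcc, hac, hcb⟩

section Eventual

variable {R : Set (X × X)} {q : ℕ} (hev : relPow R (q + q) = relPow R q)
include hev

theorem relPow_add_eq_self {m : ℕ} (hm : q ≤ m) : relPow R (m + q) = relPow R m := by
  obtain ⟨t, rfl⟩ := Nat.exists_eq_add_of_le hm
  rw [Nat.add_right_comm, relPow_add, hev, ← relPow_add]

theorem exists_recurrent_of_mem_relPow_add [Finite X] {m k : ℕ} (hm : q ≤ m) (hk : q ≤ k)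
    {x z : X} (h : (x, z) ∈ relPow R (m + k)) :
    ∃ y, (y, y) ∈ relPow R q ∧ (x, y) ∈ relPow R m ∧ (y, z) ∈ relPow R k := by
  replace h : (x, z) ∈ relPow R (m + q + k) := by
    rwa [relPow_add R (m + q), relPow_add_eq_self hev hm, ← relPow_add]
  rw [relPow_add, relPow_add] at h
  obtain ⟨v, ⟨w, hxw, hwv⟩, hvz⟩ := h
  have hidem : relComp (relPow R q) (relPow R q) = relPow R q := by rw [← relPow_add, hev]
  obtain ⟨c, hcc, hwc, hcv⟩ := exists_rel_self_between_of_relComp_self hidem hwv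
  have hxc : (x, c) ∈ relPow R (m + q) := by rw [relPow_add]; exact ⟨w, hxw, hwc⟩
  have hcz : (c, z) ∈ relPow R (k + q) := by rw [Nat.add_comm, relPow_add]; exact ⟨v, hcv, hvz⟩
  rw [relPow_add_eq_self hev hm] at hxc
  rw [relPow_add_eq_self hev hk] at hcz
  exact ⟨c, hcc, hxc, hcz⟩

end Eventual

theorem relPow_inter_prod_eq (T : Set (X × X)) (A : Set X)
    (hfac : ∀ n ≥ 1, ∀ x z, (x, z) ∈ relPow T (n + 1) →
      ∃ y ∈ A, (x, y) ∈ relPow T n ∧ (y, z) ∈ T)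
    {n : ℕ} (hn : 1 ≤ n) : relPow T n ∩ A ×ˢ A = relPow (T ∩ A ×ˢ A) n := by
  induction n, hn using Nat.le_induction with
  | base => rw [relPow_one, relPow_one]
  | succ n hn ih =>
    ext ⟨x, z⟩
    constructor
    · rintro ⟨hxz, hx, hz⟩
      obtain ⟨y, hy, hxy, hyz⟩ := hfac n hn x z hxz
      have hxy' : (x, y) ∈ relPow (T ∩ A ×ˢ A) n := by rw [← ih]; exact ⟨hxy, hx, hy⟩
      exact ⟨y, hxy', hyz, hy, hz⟩
    · rintro ⟨y, hxy, hyz, -, hz⟩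
      rw [← ih] at hxy
      exact ⟨⟨y, hxy.1, hyz⟩, hxy.2.1, hz⟩

theorem stmt13_general [Finite X] (R : Set (X × X)) (q : ℕ)
    (hev : relPow R (q + q) = relPow R q) :
    ∀ n, 1 ≤ n →
      relPow (relPow R (q + 1)) n ∩
          ({x | (x, x) ∈ relPow R q} ×ˢ {x | (x, x) ∈ relPow R q}) =
        relPow (relPow R (q + 1) ∩
          ({x | (x, x) ∈ relPow R q} ×ˢ {x | (x, x) ∈ relPow R q})) n := by
  refine fun n hn => relPow_inter_prod_eq _ _ (fun n hn x z h => ?_) hn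
  rw [relPow_relPow, Nat.succ_mul] at h
  obtain ⟨y, hy, hxy, hyz⟩ :=
    exists_recurrent_of_mem_relPow_add hev (by nlinarith) (Nat.le_succ q) h
  exact ⟨y, hy, by rwa [relPow_relPow], hyz⟩

theorem stmt13 [Finite X] (R : Set (X × X)) (q : ℕ) (hq : 0 < q)
    (hev : relPow R (q + q) = relPow R q) :
    ∀ n, 1 ≤ n →
      relPow (relPow R (q + 1)) n ∩
          ({x | (x, x) ∈ relPow R q} ×ˢ {x | (x, x) ∈ relPow R q}) =
        relPow (relPow R (q + 1) ∩
          ({x | (x, x) ∈ relPow R q} ×ˢ {x | (x, x) ∈ relPow R q})) n :=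
  stmt13_general R q hev
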